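/- arXiv:2303.08334 — 2 statements merged into one kernel-verified Lean document; each statement's English description precedes it below -/
import Mathlib

section
/- Let R, α, β be positive constants with μ = min{α,β}, let d > 0, and let F : ℝ → ℂ satisfy |F(x)| ≤ R/((1+e^{−π sinh x})^α · (1+e^{π sinh x})^β) for all x ∈ ℝ. Let h > 0, let n be a positive integer, and set N = ⌈(1/h)·arsinh((μ/β)·q(dn/μ))⌉. Then ∑_{k=N+1}^{∞} |F(kh)| ≤ [ R/( πμh·√(1 + q(dn/μ)²) ) ]·e^{−πμ·q(dn/μ)}. -/
/-!
Since `1 + e^{-y} ≥ 1` and `1 + e^{y} ≥ e^{y}`, the hypothesis gives `|F(x)| ≤ R e^{-πβ sinh x}`.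
Convexity of `sinh` on `[0, ∞)` gives `sinh((N + 1 + j)h) ≥ sinh(Nh) + (j + 1) h cosh(Nh)`, so
the tail is dominated by a geometric series with ratio `e^{-t}`, `t = πβh cosh(Nh)`, whose sum
is `1 / (e^t - 1) ≤ 1 / t`. The choice of `N` makes `β sinh(Nh) ≥ μ q` and
`β cosh(Nh) ≥ μ √(1 + q²)`.
-/

open Real

/-- `q(x) = x / arsinh x`. -/
noncomputable def qf (x : ℝ) : ℝ := x / Real.arsinh x

theorem qf_nonneg (x : ℝ) : 0 ≤ qf x := by
  rcases le_total 0 x with hx | hx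
  · exact div_nonneg hx (arsinh_nonneg_iff.mpr hx)
  · exact div_nonneg_of_nonpos hx (arsinh_nonpos_iff.mpr hx)

theorem div_one_add_exp_rpow_le {R α β : ℝ} (hR : 0 ≤ R) (hα : 0 ≤ α) (hβ : 0 ≤ β) (y : ℝ) :
    R / ((1 + exp (-y)) ^ α * (1 + exp y) ^ β) ≤ R * exp (-(β * y)) := by
  have hleft : 1 ≤ (1 + exp (-y)) ^ α := one_le_rpow (by linarith [exp_pos (-y)]) hα
  have hright : exp (β * y) ≤ (1 + exp y) ^ β := by
    rw [mul_comm, exp_mul]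
    exact rpow_le_rpow (exp_pos y).le (by linarith) hβ
  have hden : exp (β * y) ≤ (1 + exp (-y)) ^ α * (1 + exp y) ^ β := by
    nlinarith [exp_pos (β * y)]
  rw [exp_neg (β * y), ← div_eq_mul_inv]
  exact div_le_div_of_nonneg_left hR (exp_pos _) hden

theorem sinh_add_mul_cosh_le_sinh_add {x u : ℝ} (hx : 0 ≤ x) (hu : 0 ≤ u) :
    sinh x + u * cosh x ≤ sinh (x + u) := by
  rw [sinh_add]
  nlinarith [self_le_sinh_iff.mpr hu, one_le_cosh u, sinh_nonneg_iff.mpr hx, cosh_pos x]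

theorem exp_neg_div_one_sub_exp_neg_le {t : ℝ} (ht : 0 < t) : exp (-t) / (1 - exp (-t)) ≤ t⁻¹ := by
  have hr : exp (-t) < 1 := exp_lt_one_iff.mpr (by linarith)
  have hinv : exp (-t) / (1 - exp (-t)) = (exp t - 1)⁻¹ := by
    refine eq_inv_of_mul_eq_one_left ?_
    rw [div_mul_eq_mul_div, div_eq_one_iff_eq (by linarith), mul_sub, ← exp_add]
    simp
  rw [hinv]
  exact inv_anti₀ ht (by linarith [add_one_le_exp t])

def intTailEquiv (N : ℤ) : ℕ ≃ {k : ℤ // N + 1 ≤ k} where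
  toFun j := ⟨N + 1 + j, by omega⟩
  invFun k := (k.1 - (N + 1)).toNat
  left_inv j := by simp
  right_inv k := by
    ext
    have := k.2
    simp only
    omega

theorem tsum_int_tail_le {f : ℤ → ℝ} {g : ℕ → ℝ} (N : ℤ) (hf : ∀ k, 0 ≤ f k) (hg : Summable g)
    (hfg : ∀ j : ℕ, f (N + 1 + j) ≤ g j) :
    ∑' k : {k : ℤ // N + 1 ≤ k}, f k ≤ ∑' j, g j := by
  rw [← (intTailEquiv N).tsum_eq]
  exact Summable.tsum_le_tsum hfg (hg.of_nonneg_of_le (fun _ ↦ hf _) hfg) hg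

theorem tsum_tail_le_of_norm_le_exp_neg_sinh {F : ℝ → ℂ} {R b h : ℝ} (hR : 0 ≤ R) (hb : 0 < b)
    (hh : 0 < h) (hF : ∀ x, ‖F x‖ ≤ R * exp (-(b * sinh x))) {N : ℤ} (hN : 0 ≤ N) :
    ∑' k : {k : ℤ // N + 1 ≤ k}, ‖F (k * h)‖ ≤
      R * exp (-(b * sinh (N * h))) / (b * h * cosh (N * h)) := by
  set t := b * h * cosh (N * h)
  have ht : 0 < t := by positivity
  set r := exp (-t)
  have hr : r < 1 := exp_lt_one_iff.mpr (by linarith)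
  set A := R * exp (-(b * sinh (N * h)))
  have hterm : ∀ j : ℕ, ‖F (((N + 1 + j : ℤ) : ℝ) * h)‖ ≤ A * r * r ^ j := by
    intro j
    have hsinh := sinh_add_mul_cosh_le_sinh_add (x := N * h) (u := (j + 1) * h)
      (by positivity) (by positivity)
    have harg : ((N + 1 + j : ℤ) : ℝ) * h = N * h + (j + 1) * h := by push_cast; ring
    have hsplit : exp (-(b * (sinh (N * h) + (j + 1) * h * cosh (N * h)))) =
        exp (-(b * sinh (N * h))) * r * r ^ j := by
      rw [← exp_nat_mul, ← exp_add, ← exp_add]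
      congr 1
      simp only [t]
      ring
    calc ‖F (((N + 1 + j : ℤ) : ℝ) * h)‖
        ≤ R * exp (-(b * sinh (N * h + (j + 1) * h))) := harg ▸ hF _
      _ ≤ R * exp (-(b * (sinh (N * h) + (j + 1) * h * cosh (N * h)))) := by gcongr
      _ = A * r * r ^ j := by rw [hsplit]; ring
  have hgeom := summable_geometric_of_lt_one (exp_pos _).le hr
  calc ∑' k : {k : ℤ // N + 1 ≤ k}, ‖F (k * h)‖
      ≤ ∑' j : ℕ, A * r * r ^ j :=
        tsum_int_tail_le (f := fun k : ℤ ↦ ‖F (k * h)‖) N (fun _ ↦ norm_nonneg _)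
          (hgeom.mul_left _) hterm
    _ = A * (r / (1 - r)) := by
        rw [tsum_mul_left, tsum_geometric_of_lt_one (exp_pos _).le hr]; ring
    _ ≤ A * t⁻¹ := by gcongr; exact exp_neg_div_one_sub_exp_neg_le ht
    _ = A / t := (div_eq_mul_inv _ _).symm

theorem mul_sqrt_one_add_sq_le_mul_cosh {μ β q x : ℝ} (hμ : 0 ≤ μ) (hμβ : μ ≤ β) (hq : 0 ≤ q)
    (hqx : μ * q ≤ β * sinh x) : μ * √(1 + q ^ 2) ≤ β * cosh x := by
  have hsq : (μ * √(1 + q ^ 2)) ^ 2 ≤ (β * cosh x) ^ 2 := by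
    rw [mul_pow, mul_pow, sq_sqrt (by positivity), cosh_sq]
    nlinarith [mul_nonneg hμ hq, mul_le_mul hμβ hμβ hμ (hμ.trans hμβ)]
  exact (pow_le_pow_iff_left₀ (by positivity) (by nlinarith [cosh_pos x]) two_ne_zero).mp hsq

theorem stmt13_general (R α β d : ℝ) (hR : 0 < R) (hα : 0 < α) (hβ : 0 < β)
    (μ : ℝ) (hμ : μ = min α β)
    (F : ℝ → ℂ)
    (hF : ∀ x : ℝ, ‖F x‖ ≤
      R / ((1 + Real.exp (-(π * Real.sinh x))) ^ α * (1 + Real.exp (π * Real.sinh x)) ^ β))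
    (h : ℝ) (hh : 0 < h) (n : ℕ)
    (N : ℤ) (hN : N = ⌈(1 / h) * Real.arsinh ((μ / β) * qf (d * n / μ))⌉) :
    (∑' k : {k : ℤ // N + 1 ≤ k}, ‖F ((k : ℝ) * h)‖) ≤
      (R / (π * μ * h * Real.sqrt (1 + qf (d * n / μ) ^ 2))) *
        Real.exp (-(π * μ * qf (d * n / μ))) := by
  set q := qf (d * n / μ)
  have hμ0 : 0 < μ := hμ ▸ lt_min hα hβ
  have hμβ : μ ≤ β := hμ ▸ min_le_right α β
  have hq : 0 ≤ q := qf_nonneg _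
  have harsinh : arsinh (μ / β * q) ≤ N * h := by
    rw [← div_le_iff₀ hh, div_eq_inv_mul, ← one_div, hN]
    exact Int.le_ceil _
  have hN0 : 0 ≤ N :=
    hN ▸ Int.ceil_nonneg (mul_nonneg (by positivity) (arsinh_nonneg_iff.mpr (by positivity)))
  have hsinh : μ * q ≤ β * sinh (N * h) := calc
    μ * q = β * (μ / β * q) := by field_simp
    _ ≤ β * sinh (N * h) := by
      gcongr
      rw [← sinh_arsinh (μ / β * q)]
      exact sinh_le_sinh.mpr harsinh
  have hcosh := mul_sqrt_one_add_sq_le_mul_cosh hμ0.le hμβ hq hsinh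
  have hFexp : ∀ x, ‖F x‖ ≤ R * exp (-(β * π * sinh x)) := fun x ↦ by
    simpa only [mul_assoc] using (hF x).trans (div_one_add_exp_rpow_le hR.le hα.le hβ.le _)
  calc ∑' k : {k : ℤ // N + 1 ≤ k}, ‖F (k * h)‖
      ≤ R * exp (-(β * π * sinh (N * h))) / (β * π * h * cosh (N * h)) :=
        tsum_tail_le_of_norm_le_exp_neg_sinh hR.le (by positivity) hh hFexp hN0
    _ ≤ R * exp (-(π * μ * q)) / (π * μ * h * √(1 + q ^ 2)) := by
        gcongr R * exp (-?_) / ?_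
        · nlinarith [pi_pos]
        · nlinarith [mul_le_mul_of_nonneg_left hcosh (mul_pos pi_pos hh).le]
    _ = R / (π * μ * h * √(1 + q ^ 2)) * exp (-(π * μ * q)) := by ring

theorem stmt13 (R α β d : ℝ) (hR : 0 < R) (hα : 0 < α) (hβ : 0 < β) (hd : 0 < d)
    (μ : ℝ) (hμ : μ = min α β)
    (F : ℝ → ℂ)
    (hF : ∀ x : ℝ, ‖F x‖ ≤
      R / ((1 + Real.exp (-(π * Real.sinh x))) ^ α * (1 + Real.exp (π * Real.sinh x)) ^ β))
    (h : ℝ) (hh : 0 < h) (n : ℕ) (hn : 0 < n)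
    (N : ℤ) (hN : N = ⌈(1 / h) * Real.arsinh ((μ / β) * qf (d * n / μ))⌉) :
    (∑' k : {k : ℤ // N + 1 ≤ k}, ‖F ((k : ℝ) * h)‖) ≤
      (R / (π * μ * h * Real.sqrt (1 + qf (d * n / μ) ^ 2))) *
        Real.exp (-(π * μ * qf (d * n / μ))) :=
  stmt13_general R α β d hR hα hβ μ hμ F hF h hh n N hN
end

section
/- Let d > 0, μ > 0, L > 0, α, β > 0 with α + β > 0, and 0 < d < π/2. For every positive integer n, writing X = dn/μ and x₀ = d/μ, one has (4L/(π²dμ·cos^{α+β}((π/2)·sin d)·cos d)) · e^{−πμ·p(X)}/(1 − e^{−2πμ·p(X)}) ≤ (4L/(π²dμ·cos^{α+β}((π/2)·sin d)·cos d)) · ( e^{−πμ(p(x₀)−q(x₀))}/(1 − e^{−2πμ·p(x₀)}) ) · e^{−πμ·q(X)}; that is, e^{−πμ·p(X)}/(1 − e^{−2πμ·p(X)}) ≤ e^{−πμ(p(x₀)−q(x₀))} · e^{−πμ·q(X)}/(1 − e^{−2πμ·p(x₀)}) for all X ≥ x₀ > 0. -/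
open Real

/-- `p(x) = x / arsinh (x / arsinh x)`. -/
noncomputable def pf (x : ℝ) : ℝ := x / Real.arsinh (x / Real.arsinh x)

/-!
Numerator and denominator are compared separately; both comparisons follow from the
monotonicity of `p` and of `p - q` on `(0, ∞)`, and `p = (p - q) + q` with `q` increasing.
Writing `s = arsinh x` and `A = arsinh (q x)`, the inequality `q' ≤ p'` becomes
`(s - tanh s) (A² + s tanh A) ≤ A s²`, which follows from `s / (s + 1) ≤ tanh s ≤ s`,
`tanh A ≤ min A 1` and `A ≤ max 1 s`.
-/

open Set

lemma sinh_le_mul_cosh {t : ℝ} (ht : 0 ≤ t) : sinh t ≤ t * cosh t := by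
  have h := (convex_Icc 0 t).image_sub_le_mul_sub_of_deriv_le continuous_sinh.continuousOn
    differentiable_sinh.differentiableOn (C := cosh t) (fun y hy => by
      rw [interior_Icc] at hy
      rw [Real.deriv_sinh, cosh_le_cosh, abs_of_pos hy.1, abs_of_nonneg ht]
      exact hy.2.le) 0 (left_mem_Icc.2 ht) t (right_mem_Icc.2 ht) ht
  simpa [mul_comm] using h

lemma mul_cosh_le_add_one_mul_sinh (t : ℝ) : t * cosh t ≤ (t + 1) * sinh t := by
  have hexp : 1 + 2 * t ≤ exp t * exp t := by
    rw [← exp_add]; linarith [add_one_le_exp (t + t)]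
  have hinv : exp t * exp (-t) = 1 := by rw [← exp_add]; simp
  rw [cosh_eq, sinh_eq]
  nlinarith [exp_pos t, exp_pos (-t)]

lemma self_le_arsinh_mul_sqrt {x : ℝ} (hx : 0 ≤ x) : x ≤ arsinh x * √(1 + x ^ 2) := by
  simpa [sinh_arsinh, cosh_arsinh] using sinh_le_mul_cosh (arsinh_nonneg_iff.2 hx)

lemma arsinh_mul_sqrt_le (x : ℝ) : arsinh x * √(1 + x ^ 2) ≤ (arsinh x + 1) * x := by
  simpa [sinh_arsinh, cosh_arsinh] using mul_cosh_le_add_one_mul_sinh (arsinh x)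

lemma monotoneOn_of_hasDerivAt_nonneg {D : Set ℝ} (hD : Convex ℝ D)
    {f f' : ℝ → ℝ} (hf : ∀ x ∈ D, HasDerivAt f (f' x) x) (hf' : ∀ x ∈ D, 0 ≤ f' x) :
    MonotoneOn f D :=
  monotoneOn_of_hasDerivWithinAt_nonneg hD (fun x hx => (hf x hx).continuousAt.continuousWithinAt)
    (fun x hx => (hf x (interior_subset hx)).hasDerivWithinAt)
    (fun x hx => hf' x (interior_subset hx))

lemma qf_pos {x : ℝ} (hx : 0 < x) : 0 < qf x := div_pos hx (arsinh_pos_iff.2 hx)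

lemma pf_pos {x : ℝ} (hx : 0 < x) : 0 < pf x := div_pos hx (arsinh_pos_iff.2 (qf_pos hx))

noncomputable def qfDeriv (x : ℝ) : ℝ := (arsinh x - x / √(1 + x ^ 2)) / arsinh x ^ 2

noncomputable def pfDeriv (x : ℝ) : ℝ :=
  (arsinh (qf x) - x / √(1 + qf x ^ 2) * qfDeriv x) / arsinh (qf x) ^ 2

lemma hasDerivAt_qf {x : ℝ} (hx : x ≠ 0) : HasDerivAt qf (qfDeriv x) x :=
  ((hasDerivAt_id x).div (hasDerivAt_arsinh x) (arsinh_eq_zero_iff.not.2 hx)).congr_deriv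
    (by rw [qfDeriv]; simp only [id]; ring)

lemma hasDerivAt_pf {x : ℝ} (hx : 0 < x) : HasDerivAt pf (pfDeriv x) x :=
  ((hasDerivAt_id x).div ((hasDerivAt_qf hx.ne').arsinh)
    (arsinh_pos_iff.2 (qf_pos hx)).ne').congr_deriv (by rw [pfDeriv]; simp only [id]; ring)

lemma qfDeriv_nonneg {x : ℝ} (hx : 0 < x) : 0 ≤ qfDeriv x := by
  have hc : 0 < √(1 + x ^ 2) := by positivity
  exact div_nonneg (sub_nonneg.2 ((div_le_iff₀ hc).2 (self_le_arsinh_mul_sqrt hx.le))) (sq_nonneg _)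

lemma qf_monotoneOn : MonotoneOn qf (Ioi 0) :=
  monotoneOn_of_hasDerivAt_nonneg (convex_Ioi 0)
    (fun _ hx => hasDerivAt_qf (ne_of_gt hx)) (fun _ hx => qfDeriv_nonneg hx)

lemma arsinh_qf_le_max {x : ℝ} (hx : 0 < x) : arsinh (qf x) ≤ max 1 (arsinh x) := by
  rcases le_total x (sinh 1) with h | h
  · have hq : qf x ≤ sinh 1 := by
      simpa [qf, arsinh_sinh] using qf_monotoneOn hx (sinh_pos_iff.2 one_pos) h
    exact le_max_of_le_left (by simpa [arsinh_sinh] using arsinh_le_arsinh.2 hq)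
  · have h1 : 1 ≤ arsinh x := by simpa [arsinh_sinh] using arsinh_le_arsinh.2 h
    exact le_max_of_le_right (arsinh_le_arsinh.2 (div_le_self hx.le h1))

lemma qfDeriv_le_pfDeriv {x : ℝ} (hx : 0 < x) : qfDeriv x ≤ pfDeriv x := by
  set s := arsinh x with hs_def
  set q := qf x with hq_def
  set A := arsinh q
  have hs : 0 < s := arsinh_pos_iff.2 hx
  have hq : 0 < q := qf_pos hx
  have hA : 0 < A := arsinh_pos_iff.2 hq
  have hc : 0 < √(1 + x ^ 2) := by positivity
  have hE : 0 < √(1 + q ^ 2) := by positivity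
  have hx_eq : x = s * q := by rw [hq_def, qf, ← hs_def]; field_simp
  set t := s - x / √(1 + x ^ 2)
  set u := x / √(1 + q ^ 2)
  have ht : 0 ≤ t := sub_nonneg.2 ((div_le_iff₀ hc).2 (self_le_arsinh_mul_sqrt hx.le))
  have hts : t * (s + 1) ≤ s ^ 2 := by
    have hr : s ≤ x / √(1 + x ^ 2) * (s + 1) := by
      rw [div_mul_eq_mul_div, le_div_iff₀ hc]; linarith [arsinh_mul_sqrt_le x]
    linarith [show t * (s + 1) = s ^ 2 + s - x / √(1 + x ^ 2) * (s + 1) by ring]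
  have huA : u ≤ s * A := by
    rw [div_le_iff₀ hE, hx_eq, mul_assoc]
    exact mul_le_mul_of_nonneg_left (self_le_arsinh_mul_sqrt hq.le) hs.le
  have hu1 : u ≤ s := by
    rw [div_le_iff₀ hE, hx_eq]
    refine mul_le_mul_of_nonneg_left ?_ hs.le
    exact Real.le_sqrt_of_sq_le (by linarith)
  have hAs := arsinh_qf_le_max hx
  have hAu : A ^ 2 + u ≤ A * (s + 1) := by
    rcases le_total A 1 with h | h
    · nlinarith
    · rcases max_cases 1 s with ⟨hm, _⟩ | ⟨hm, _⟩ <;> rw [hm] at hAs <;> nlinarith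
  show t / s ^ 2 ≤ (A - u * (t / s ^ 2)) / A ^ 2
  have hw : 0 ≤ t / s ^ 2 := by positivity
  have hws : t / s ^ 2 * (s + 1) ≤ 1 := by
    rw [div_mul_eq_mul_div, div_le_one (by positivity)]; exact hts
  rw [le_div_iff₀ (by positivity)]
  nlinarith [mul_le_mul_of_nonneg_left hAu hw]

lemma pf_sub_qf_monotoneOn : MonotoneOn (fun x => pf x - qf x) (Ioi 0) :=
  monotoneOn_of_hasDerivAt_nonneg (convex_Ioi 0)
    (fun _ hx => (hasDerivAt_pf hx).sub (hasDerivAt_qf (ne_of_gt hx)))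
    (fun _ hx => sub_nonneg.2 (qfDeriv_le_pfDeriv hx))

lemma pf_monotoneOn : MonotoneOn pf (Ioi 0) := by
  simpa using pf_sub_qf_monotoneOn.add qf_monotoneOn

lemma exp_neg_div_one_sub_exp_neg_le_s15 {c P P₀ Q Q₀ : ℝ} (hc : 0 < c) (hP₀ : 0 < P₀)
    (hP : P₀ ≤ P) (hPQ : P₀ - Q₀ + Q ≤ P) :
    exp (-(c * P)) / (1 - exp (-(2 * c * P))) ≤
      exp (-(c * (P₀ - Q₀))) * exp (-(c * Q)) / (1 - exp (-(2 * c * P₀))) := by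
  have hnum : exp (-(c * P)) ≤ exp (-(c * (P₀ - Q₀))) * exp (-(c * Q)) := by
    rw [← exp_add, exp_le_exp]; nlinarith
  have hden₀ : 0 < 1 - exp (-(2 * c * P₀)) := by
    rw [sub_pos, exp_lt_one_iff]; nlinarith
  have hden : 1 - exp (-(2 * c * P₀)) ≤ 1 - exp (-(2 * c * P)) := by
    rw [sub_le_sub_iff_left, exp_le_exp]; nlinarith
  exact div_le_div₀ (by positivity) hnum hden₀ hden

theorem stmt15_general (L α β d μ : ℝ) (hL : 0 < L)
    (hμ : 0 < μ) (hd0 : 0 < d) (hd : d < π / 2) :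
    (∀ n : ℕ, 0 < n →
      (4 * L / (π ^ 2 * d * μ * Real.cos (π / 2 * Real.sin d) ^ (α + β) * Real.cos d)) *
          (Real.exp (-(π * μ * pf (d * n / μ))) /
            (1 - Real.exp (-(2 * π * μ * pf (d * n / μ))))) ≤
        (4 * L / (π ^ 2 * d * μ * Real.cos (π / 2 * Real.sin d) ^ (α + β) * Real.cos d)) *
          (Real.exp (-(π * μ * (pf (d / μ) - qf (d / μ)))) /
            (1 - Real.exp (-(2 * π * μ * pf (d / μ))))) *
          Real.exp (-(π * μ * qf (d * n / μ))))
    ∧ (∀ x₀ X : ℝ, 0 < x₀ → x₀ ≤ X →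
        Real.exp (-(π * μ * pf X)) / (1 - Real.exp (-(2 * π * μ * pf X))) ≤
          Real.exp (-(π * μ * (pf x₀ - qf x₀))) * Real.exp (-(π * μ * qf X)) /
            (1 - Real.exp (-(2 * π * μ * pf x₀)))) := by
  have hbound : ∀ x₀ X : ℝ, 0 < x₀ → x₀ ≤ X →
      exp (-(π * μ * pf X)) / (1 - exp (-(2 * π * μ * pf X))) ≤
        exp (-(π * μ * (pf x₀ - qf x₀))) * exp (-(π * μ * qf X)) /
          (1 - exp (-(2 * π * μ * pf x₀))) := fun x₀ X h₀ hX => by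
    have hX₀ : X ∈ Ioi 0 := h₀.trans_le hX
    simpa only [mul_assoc] using exp_neg_div_one_sub_exp_neg_le_s15 (mul_pos pi_pos hμ)
      (pf_pos h₀) (pf_monotoneOn h₀ hX₀ hX) (by linarith [pf_sub_qf_monotoneOn h₀ hX₀ hX])
  refine ⟨fun n hn => ?_, hbound⟩
  have hcos : 0 ≤ cos (π / 2 * sin d) := cos_nonneg_of_neg_pi_div_two_le_of_le
    (by nlinarith [pi_pos, neg_one_le_sin d]) (by nlinarith [pi_pos, sin_le_one d])
  have hK : 0 ≤ 4 * L / (π ^ 2 * d * μ * cos (π / 2 * sin d) ^ (α + β) * cos d) := by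
    have hpow := rpow_nonneg hcos (α + β)
    have hcos_d := cos_nonneg_of_neg_pi_div_two_le_of_le (by linarith) hd.le
    positivity
  have hn : d / μ ≤ d * n / μ := by
    gcongr; exact le_mul_of_one_le_right hd0.le (by exact_mod_cast hn)
  calc _ ≤ _ := mul_le_mul_of_nonneg_left (hbound _ _ (div_pos hd0 hμ) hn) hK
    _ = _ := by ring

theorem stmt15 (L α β d μ : ℝ) (hL : 0 < L) (hα : 0 < α) (hβ : 0 < β)
    (hμ : 0 < μ) (hd0 : 0 < d) (hd : d < π / 2) :
    (∀ n : ℕ, 0 < n →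
      (4 * L / (π ^ 2 * d * μ * Real.cos (π / 2 * Real.sin d) ^ (α + β) * Real.cos d)) *
          (Real.exp (-(π * μ * pf (d * n / μ))) /
            (1 - Real.exp (-(2 * π * μ * pf (d * n / μ))))) ≤
        (4 * L / (π ^ 2 * d * μ * Real.cos (π / 2 * Real.sin d) ^ (α + β) * Real.cos d)) *
          (Real.exp (-(π * μ * (pf (d / μ) - qf (d / μ)))) /
            (1 - Real.exp (-(2 * π * μ * pf (d / μ))))) *
          Real.exp (-(π * μ * qf (d * n / μ))))
    ∧ (∀ x₀ X : ℝ, 0 < x₀ → x₀ ≤ X →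
        Real.exp (-(π * μ * pf X)) / (1 - Real.exp (-(2 * π * μ * pf X))) ≤
          Real.exp (-(π * μ * (pf x₀ - qf x₀))) * Real.exp (-(π * μ * qf X)) /
            (1 - Real.exp (-(2 * π * μ * pf x₀)))) :=
  stmt15_general L α β d μ hL hμ hd0 hd
end
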